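/- arXiv:1812.02219 — 5 statements merged into one kernel-verified Lean document; each statement's English description precedes it below -/
import Mathlib

section
/- Let n and q be positive integers with n ≤ q² + 3q − 1, and let T = {0, ∞} ∪ {k : k ∈ ℤ, 1 ≤ |k| ≤ q} ∪ {1/k : k ∈ ℤ, 1 ≤ |k| ≤ q} ⊆ ℚ ∪ {∞}. Then any two functions f, g : ℤ² → ℝ that are T-clue-equivalent on I_{n,n} agree at every point of I_{n,n}; equivalently, every solvable n × n RK puzzle with clue slopes T has a unique solution. -/
open Classical

/-- A slope is an element of `ℚ ∪ {∞}`; `none` denotes `∞`. -/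
abbrev Slope := Option ℚ

/-- The clue of `f` along the line of slope `s` (vertical line `x = c` when `s = ∞ = none`,
and the line `y = r·x + c` when `s = some r`), with respect to the grid
`I_{n,m} = {1,…,n} × {1,…,m} ⊆ ℤ²`: the sum of `f` over the grid points lying on the line. -/
noncomputable def clueSum (n m : ℕ) (s : Slope) (c : ℝ) (f : ℤ × ℤ → ℝ) : ℝ :=
  ∑ p ∈ (Finset.Icc (1 : ℤ) n ×ˢ Finset.Icc (1 : ℤ) m).filter
      (fun p => match s with
        | none => (p.1 : ℝ) = c
        | some r => (p.2 : ℝ) = (r : ℝ) * (p.1 : ℝ) + c),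
    f p

/-- `f` and `g` are `T`-clue-equivalent on `I_{n,m}`: for every slope `s ∈ T` and every line
of slope `s`, the clues of `f` and `g` along that line agree. -/
def ClueEquiv (n m : ℕ) (T : Set Slope) (f g : ℤ × ℤ → ℝ) : Prop :=
  ∀ s ∈ T, ∀ c : ℝ, clueSum n m s c f = clueSum n m s c g

/-- The entry `p ∈ I_{n,m}` is uniquely solvable with respect to the slope set `T`. -/
def UniqSolv (n m : ℕ) (T : Set Slope) (p : ℤ × ℤ) : Prop :=
  ∀ f g : ℤ × ℤ → ℝ, ClueEquiv n m T f g → f p = g p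

/-- The slope set `{0, ∞} ∪ {k : 1 ≤ |k| ≤ q} ∪ {1/k : 1 ≤ |k| ≤ q}`. -/
def slopesUpTo (q : ℕ) : Set Slope :=
  {some 0, none} ∪
    {s | ∃ k : ℤ, 1 ≤ |k| ∧ |k| ≤ (q : ℤ) ∧ (s = some (k : ℚ) ∨ s = some (1 / (k : ℚ)))}

open Function Set

/-!
Let `h` be `f - g` restricted to the grid. It is finitely supported in a strip of width `n`, and
its sums along all lines of direction `(den r, num r)` vanish for every finite slope `r ∈ T`.

A finitely supported `h` in a strip of width `w` whose line sums vanish along pairwise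
non-parallel directions `dᵢ` with `∑ dᵢ.1 ≥ w`, `dᵢ.1 > 0`, is zero. Indeed, for one of them `d`,
the ray sum `u p = ∑_{k ≥ 0} h (p - k d)` satisfies `h = u - u (· - d)`; the vanishing line sums
along `d` force `u` into a strip narrower by `d.1`, and the line sums of `u` along the other
directions are invariant under translation by `d`, hence zero because far translates of a line
miss the support. Induct on the directions.

The finite slopes `0, ±k, ±1/k` (`1 ≤ k ≤ q`) of `T` have denominators summing to
`q² + 3q - 1 ≥ n`.
-/

lemma finsum_nat_eq_add_finsum_succ {M : Type*} [AddCommMonoid M] {f : ℕ → M}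
    (hf : HasFiniteSupport f) : ∑ᶠ k, f k = f 0 + ∑ᶠ k, f (k + 1) := by
  rw [← add_finsum_cond_ne 0 hf, ← finsum_mem_range Nat.succ_injective, Nat.range_succ]
  simp only [Nat.pos_iff_ne_zero]
  rfl

section LineSums

variable {G : Type*} [AddCommGroup G]

noncomputable def lineSum (h : ℤ × ℤ → G) (d p : ℤ × ℤ) : G := ∑ᶠ t : ℤ, h (p + t • d)

lemma injective_add_zsmul {d : ℤ × ℤ} (hd : d ≠ 0) (p : ℤ × ℤ) :
    Injective fun t : ℤ => p + t • d :=
  (add_right_injective p).comp (smul_left_injective ℤ hd)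

lemma lineSum_eq_zero_of_invariant {u : ℤ × ℤ → G} (hu : HasFiniteSupport u) {d e : ℤ × ℤ}
    (hde : e.1 * d.2 ≠ e.2 * d.1) (hinv : ∀ p, lineSum u e p = lineSum u e (p - d))
    (p : ℤ × ℤ) : lineSum u e p = 0 := by
  set φ : ℤ × ℤ → ℤ := fun x => e.1 * x.2 - e.2 * x.1 with hφ
  have hφe (x : ℤ × ℤ) (t : ℤ) : φ (x + t • e) = φ x := by
    simp only [hφ, Prod.fst_add, Prod.snd_add, Prod.smul_fst, Prod.smul_snd, smul_eq_mul]
    ring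
  have hφd (m : ℕ) : φ (p - m • d) = φ p - m * (e.1 * d.2 - e.2 * d.1) := by
    simp only [hφ, Prod.fst_sub, Prod.snd_sub, nsmul_eq_mul, Prod.fst_mul, Prod.snd_mul,
      Prod.fst_natCast, Prod.snd_natCast]
    ring
  have hshift (m : ℕ) : lineSum u e p = lineSum u e (p - m • d) := by
    induction m with
    | zero => simp
    | succ m ih => rw [ih, hinv, succ_nsmul, sub_add_eq_sub_sub]
  -- `φ` is constant on lines of direction `e` and changes by `φ d ≠ 0` at each step along `d`,
  -- so some translate `p - m • d` lies on a line missing the finite support of `u`.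
  have hfin : {m : ℕ | φ (p - m • d) ∈ φ '' support u}.Finite := by
    refine Set.Finite.preimage (fun m _ k _ hmk => ?_) (hu.image φ)
    simp only [hφd, sub_right_inj] at hmk
    exact_mod_cast mul_right_cancel₀ (sub_ne_zero.mpr hde) hmk
  obtain ⟨m, hm⟩ := hfin.exists_notMem
  rw [hshift m]
  refine finsum_eq_zero_of_forall_eq_zero fun t => ?_
  by_contra hne
  exact hm ⟨_, hne, hφe _ t⟩

lemma hasFiniteSupport_comp_line {h : ℤ × ℤ → G} (hh : HasFiniteSupport h) {d : ℤ × ℤ}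
    (hd : d ≠ 0) (p : ℤ × ℤ) : HasFiniteSupport fun t : ℤ => h (p + t • d) :=
  hh.fun_comp_of_injective (injective_add_zsmul hd p)

noncomputable def raySum (h : ℤ × ℤ → G) (d p : ℤ × ℤ) : G := ∑ᶠ k : ℕ, h (p - (k : ℤ) • d)

lemma raySum_sub_raySum {h : ℤ × ℤ → G} (hh : HasFiniteSupport h) {d : ℤ × ℤ} (hd : d ≠ 0)
    (p : ℤ × ℤ) : raySum h d p - raySum h d (p - d) = h p := by
  have hray : HasFiniteSupport fun k : ℕ => h (p - (k : ℤ) • d) := by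
    refine hh.fun_comp_of_injective (sub_right_injective.comp ?_)
    exact (smul_left_injective ℤ hd).comp Nat.cast_injective
  rw [raySum, finsum_nat_eq_add_finsum_succ hray, raySum]
  simp [add_smul, sub_sub, add_comm]

lemma raySum_eq_zero_of_lt {h : ℤ × ℤ → G} {a : ℤ} (hh : support h ⊆ Prod.fst ⁻¹' Ici a)
    {d : ℤ × ℤ} (hd : 0 ≤ d.1) {p : ℤ × ℤ} (hp : p.1 < a) : raySum h d p = 0 := by
  refine finsum_eq_zero_of_forall_eq_zero fun k => ?_
  by_contra hne
  have : a ≤ p.1 - k * d.1 := by simpa using hh hne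
  nlinarith

lemma raySum_eq_lineSum {h : ℤ × ℤ → G} {d p : ℤ × ℤ}
    (hp : ∀ t : ℤ, 0 < t → h (p + t • d) = 0) : raySum h d p = lineSum h d p := by
  have hneg : Injective fun k : ℕ => -(k : ℤ) := neg_injective.comp Nat.cast_injective
  calc raySum h d p = ∑ᶠ k : ℕ, h (p + (-(k : ℤ)) • d) := by simp [raySum, sub_eq_add_neg]
    _ = ∑ᶠ t ∈ range fun k : ℕ => -(k : ℤ), h (p + t • d) :=
      (finsum_mem_range (f := fun t : ℤ => h (p + t • d)) hneg).symm
    _ = ∑ᶠ t ∈ univ, h (p + t • d) := by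
      refine finsum_mem_inter_support_eq' _ _ _ fun t ht => ?_
      simp only [mem_range, mem_univ, iff_true]
      exact ⟨(-t).toNat, by have := not_lt.mp (mt (hp t) ht); omega⟩
    _ = lineSum h d p := finsum_mem_univ _

lemma support_raySum_subset {h : ℤ × ℤ → G} {a b : ℤ} (hh : support h ⊆ Prod.fst ⁻¹' Ico a b)
    {d : ℤ × ℤ} (hd : 0 < d.1) (hline : ∀ p, lineSum h d p = 0) :
    support (raySum h d) ⊆ Prod.fst ⁻¹' Ico a (b - d.1) := by
  intro p hp
  refine ⟨not_lt.mp fun hpa => hp ?_, not_le.mp fun hpb => hp ?_⟩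
  · exact raySum_eq_zero_of_lt (hh.trans (preimage_mono Ico_subset_Ici_self)) hd.le hpa
  · rw [raySum_eq_lineSum fun t ht => ?_, hline]
    by_contra hne
    have : (p + t • d).1 < b := (hh hne).2
    simp only [Prod.fst_add, Prod.smul_fst, smul_eq_mul] at this
    nlinarith

lemma hasFiniteSupport_raySum {h : ℤ × ℤ → G} (hh : HasFiniteSupport h) {a b : ℤ}
    (ha : support h ⊆ Prod.fst ⁻¹' Ici a) {d : ℤ × ℤ} (hd : 0 < d.1)
    (hb : support (raySum h d) ⊆ Prod.fst ⁻¹' Iio b) : HasFiniteSupport (raySum h d) := by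
  refine ((hh.prod (finite_Iio (b - a).toNat)).image fun x => x.1 + (x.2 : ℤ) • d).subset
    fun p hp => ?_
  obtain ⟨k, hk⟩ : ∃ k : ℕ, h (p - (k : ℤ) • d) ≠ 0 := by
    by_contra! H
    exact hp (finsum_eq_zero_of_forall_eq_zero H)
  have h1 : a ≤ p.1 - k * d.1 := by simpa using ha hk
  have h2 : p.1 < b := hb hp
  refine ⟨(p - (k : ℤ) • d, k), ⟨hk, ?_⟩, sub_add_cancel _ _⟩
  simp only [mem_Iio]
  nlinarith [Int.self_le_toNat (b - a)]

lemma lineSum_raySum_eq_zero {h : ℤ × ℤ → G} (hh : HasFiniteSupport h) {d e : ℤ × ℤ}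
    (hd : d ≠ 0) (he : e ≠ 0) (hde : e.1 * d.2 ≠ e.2 * d.1) (hu : HasFiniteSupport (raySum h d))
    (hline : ∀ p, lineSum h e p = 0) (p : ℤ × ℤ) : lineSum (raySum h d) e p = 0 := by
  refine lineSum_eq_zero_of_invariant hu hde (fun q => ?_) p
  have hdiff : lineSum h e q = lineSum (raySum h d) e q - lineSum (raySum h d) e (q - d) := by
    rw [lineSum, lineSum, lineSum, ← finsum_sub_distrib (hasFiniteSupport_comp_line hu he q)
      (hasFiniteSupport_comp_line hu he (q - d))]
    refine finsum_congr fun t => ?_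
    rw [sub_add_eq_add_sub, raySum_sub_raySum hh hd]
  rw [hline, eq_comm, sub_eq_zero] at hdiff
  exact hdiff

theorem eq_zero_of_lineSum_eq_zero {ι : Type*} (s : Finset ι) (dir : ι → ℤ × ℤ)
    (hpos : ∀ i ∈ s, 0 < (dir i).1)
    (hpar : (s : Set ι).Pairwise fun i j => (dir i).1 * (dir j).2 ≠ (dir i).2 * (dir j).1)
    {h : ℤ × ℤ → G} (hh : HasFiniteSupport h) (a : ℤ)
    (hsupp : support h ⊆ Prod.fst ⁻¹' Ico a (a + ∑ i ∈ s, (dir i).1))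
    (hline : ∀ i ∈ s, ∀ p, lineSum h (dir i) p = 0) : h = 0 := by
  classical
  induction s using Finset.induction_on generalizing h with
  | empty =>
    simpa using hsupp
  | insert i s hi ih =>
    rw [Finset.sum_insert hi] at hsupp
    rw [Finset.coe_insert, Set.pairwise_insert] at hpar
    have hd : 0 < (dir i).1 := hpos i (s.mem_insert_self i)
    have hd0 : dir i ≠ 0 := ne_of_apply_ne Prod.fst hd.ne'
    set u := raySum h (dir i) with hu_def
    have hu_supp : support u ⊆ Prod.fst ⁻¹' Ico a (a + ∑ j ∈ s, (dir j).1) := by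
      have := support_raySum_subset hsupp hd (hline i (s.mem_insert_self i))
      rwa [add_left_comm, add_sub_cancel_left] at this
    have hu_fin : HasFiniteSupport u :=
      hasFiniteSupport_raySum hh (hsupp.trans (preimage_mono Ico_subset_Ici_self)) hd
        (hu_supp.trans (preimage_mono Ico_subset_Iio_self))
    have hu : u = 0 := by
      refine ih (fun j hj => hpos j (Finset.mem_insert_of_mem hj)) hpar.1 hu_fin hu_supp
        fun j hj => ?_
      have hj0 : dir j ≠ 0 := ne_of_apply_ne Prod.fst (hpos j (Finset.mem_insert_of_mem hj)).ne'
      exact lineSum_raySum_eq_zero hh hd0 hj0 ((hpar.2 j hj (by rintro rfl; exact hi hj)).2)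
        hu_fin (hline j (Finset.mem_insert_of_mem hj))
    funext p
    rw [← raySum_sub_raySum hh hd0 p, ← hu_def, hu, Pi.zero_apply, Pi.zero_apply, sub_zero]

end LineSums

lemma Rat.intCast_eq_mul_intCast_iff (r : ℚ) (x y : ℤ) :
    (y : ℚ) = r * x ↔ ∃ t : ℤ, x = t * r.den ∧ y = t * r.num := by
  have hden : (r.den : ℤ) ≠ 0 := by positivity
  have hcross : (y : ℚ) = r * x ↔ r.den * y = r.num * x := by
    conv_lhs => rw [← Rat.num_div_den r]
    rw [div_mul_eq_mul_div, eq_div_iff (by positivity), ← Int.cast_inj (α := ℚ)]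
    push_cast
    constructor <;> intro h <;> linarith
  have hcop : IsCoprime (r.den : ℤ) r.num := by
    rw [Int.isCoprime_iff_gcd_eq_one]; exact r.reduced.symm
  rw [hcross]
  constructor
  · intro h
    obtain ⟨t, rfl⟩ : (r.den : ℤ) ∣ x := hcop.dvd_of_dvd_mul_left ⟨y, by rw [h]⟩
    exact ⟨t, mul_comm _ _, mul_left_cancel₀ hden (by linear_combination h)⟩
  · rintro ⟨t, rfl, rfl⟩
    ring

def slopeDir (r : ℚ) : ℤ × ℤ := (r.den, r.num)

lemma slopeDir_ne_zero (r : ℚ) : slopeDir r ≠ 0 :=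
  ne_of_apply_ne Prod.fst (by simp [slopeDir])

lemma eq_mul_add_iff_exists_eq_add_zsmul_slopeDir (r : ℚ) (p x : ℤ × ℤ) :
    (x.2 : ℝ) = r * x.1 + (p.2 - r * p.1) ↔ ∃ t : ℤ, x = p + t • slopeDir r := by
  have hcast : (x.2 : ℝ) = r * x.1 + (p.2 - r * p.1) ↔
      ((x.2 - p.2 : ℤ) : ℚ) = r * (x.1 - p.1 : ℤ) := by
    rw [← (Rat.cast_injective (α := ℝ)).eq_iff]
    push_cast
    constructor <;> intro h <;> linarith
  rw [hcast, Rat.intCast_eq_mul_intCast_iff]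
  refine exists_congr fun t => ?_
  rw [Prod.ext_iff]
  simp only [slopeDir, Prod.fst_add, Prod.snd_add, smul_eq_mul, Prod.smul_mk]
  omega

lemma slopeDir_fst_pos (r : ℚ) : 0 < (slopeDir r).1 := by
  simp [slopeDir, r.pos]

lemma pairwise_slopeDir_not_parallel (s : Set ℚ) :
    s.Pairwise fun r r' => (slopeDir r).1 * (slopeDir r').2 ≠ (slopeDir r).2 * (slopeDir r').1 :=
  fun r _ r' _ hne hc => hne (Rat.eq_iff_mul_eq_mul.mpr (by simp only [slopeDir] at hc; linarith))

lemma clueSum_sub (n m : ℕ) (s : Slope) (c : ℝ) (f g : ℤ × ℤ → ℝ) :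
    clueSum n m s c (f - g) = clueSum n m s c f - clueSum n m s c g :=
  Finset.sum_sub_distrib _ _

noncomputable def grid (n m : ℕ) : Finset (ℤ × ℤ) :=
  Finset.Icc (1 : ℤ) n ×ˢ Finset.Icc (1 : ℤ) m

lemma clueSum_eq_lineSum (n m : ℕ) (r : ℚ) (f : ℤ × ℤ → ℝ) (p : ℤ × ℤ) :
    clueSum n m (some r) (p.2 - r * p.1) f =
      lineSum ((grid n m : Set (ℤ × ℤ)).indicator f) (slopeDir r) p := by
  calc clueSum n m (some r) (p.2 - r * p.1) f
      = ∑ᶠ x ∈ ((grid n m).filter fun x => (x.2 : ℝ) = r * x.1 + (p.2 - r * p.1) :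
          Set (ℤ × ℤ)), (grid n m : Set (ℤ × ℤ)).indicator f x := by
        rw [finsum_mem_coe_finset]
        exact Finset.sum_congr (by rfl) fun x hx =>
          (indicator_of_mem (Finset.mem_filter.mp hx).1 f).symm
    _ = ∑ᶠ x ∈ range fun t : ℤ => p + t • slopeDir r, (grid n m : Set (ℤ × ℤ)).indicator f x := by
        refine finsum_mem_inter_support_eq' _ _ _ fun x hx => ?_
        have hxA : x ∈ grid n m := support_indicator_subset hx
        simp [hxA, eq_mul_add_iff_exists_eq_add_zsmul_slopeDir, eq_comm]
    _ = _ := finsum_mem_range (injective_add_zsmul (slopeDir_ne_zero r) p)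

lemma slopesUpTo_mono {q q' : ℕ} (h : q ≤ q') : slopesUpTo q ⊆ slopesUpTo q' := by
  rintro s (hs | ⟨k, h1, h2, h3⟩)
  · exact Or.inl hs
  · exact Or.inr ⟨k, h1, h2.trans (by exact_mod_cast h), h3⟩

def slopesOfHeight (k : ℕ) : Finset ℚ := {(k : ℚ), -(k : ℚ), (k : ℚ)⁻¹, -(k : ℚ)⁻¹}

lemma num_den_of_mem_slopesOfHeight {k : ℕ} (hk : 0 < k) {r : ℚ} (hr : r ∈ slopesOfHeight k) :
    (r.num.natAbs = k ∧ r.den = 1) ∨ (r.num.natAbs = 1 ∧ r.den = k) := by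
  simp only [slopesOfHeight, Finset.mem_insert, Finset.mem_singleton] at hr
  rcases hr with rfl | rfl | rfl | rfl <;>
    simp [Rat.inv_natCast_num_of_pos hk, Rat.inv_natCast_den_of_pos hk]

lemma sum_den_slopesOfHeight {k : ℕ} (hk : 2 ≤ k) :
    ∑ r ∈ slopesOfHeight k, r.den = 2 * k + 2 := by
  have h1 : (1 : ℚ) < k := by exact_mod_cast hk
  have h2 : 0 < (k : ℚ)⁻¹ := by positivity
  have h3 : (k : ℚ)⁻¹ < 1 := inv_lt_one_of_one_lt₀ h1
  rw [slopesOfHeight, Finset.sum_insert, Finset.sum_insert, Finset.sum_insert, Finset.sum_singleton]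
  · simp only [Rat.den_natCast, Rat.neg_den, Rat.inv_natCast_den_of_pos (by omega : 0 < k)]
    ring
  all_goals simp only [Finset.mem_insert, Finset.mem_singleton, not_or]
  all_goals (repeat' constructor) <;> intro h <;> linarith

lemma mem_slopesUpTo_of_mem_slopesOfHeight {k : ℕ} (hk : 0 < k) {r : ℚ}
    (hr : r ∈ slopesOfHeight k) : some r ∈ slopesUpTo k := by
  simp only [slopesOfHeight, Finset.mem_insert, Finset.mem_singleton] at hr
  refine Or.inr ?_
  rcases hr with rfl | rfl | rfl | rfl
  · exact ⟨k, by simp; omega, by simp, Or.inl (by simp)⟩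
  · exact ⟨-k, by simp; omega, by simp, Or.inl (by simp)⟩
  · exact ⟨k, by simp; omega, by simp, Or.inr (by simp)⟩
  · exact ⟨-k, by simp; omega, by simp, Or.inr (by simp)⟩

-- The finite slopes of `slopesUpTo (q + 1)`; starting from `q + 1 = 1` lists `±1 = ±1/1` once.
def slopeFinset : ℕ → Finset ℚ
  | 0 => {0, 1, -1}
  | q + 1 => slopeFinset q ∪ slopesOfHeight (q + 2)

lemma mem_slopesUpTo_of_mem_slopeFinset {q : ℕ} {r : ℚ} (hr : r ∈ slopeFinset q) :
    some r ∈ slopesUpTo (q + 1) := by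
  induction q with
  | zero =>
    simp only [slopeFinset, Finset.mem_insert, Finset.mem_singleton] at hr
    rcases hr with rfl | rfl | rfl
    · exact Or.inl (Or.inl rfl)
    · exact mem_slopesUpTo_of_mem_slopesOfHeight one_pos (by simp [slopesOfHeight])
    · exact mem_slopesUpTo_of_mem_slopesOfHeight one_pos (by simp [slopesOfHeight])
  | succ q ih =>
    rcases Finset.mem_union.mp hr with hr | hr
    · exact slopesUpTo_mono (by omega) (ih hr)
    · exact mem_slopesUpTo_of_mem_slopesOfHeight (by omega) hr

lemma den_le_and_natAbs_num_le_of_mem_slopeFinset {q : ℕ} {r : ℚ} (hr : r ∈ slopeFinset q) :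
    r.den ≤ q + 1 ∧ r.num.natAbs ≤ q + 1 := by
  induction q with
  | zero =>
    simp only [slopeFinset, Finset.mem_insert, Finset.mem_singleton] at hr
    rcases hr with rfl | rfl | rfl <;> simp
  | succ q ih =>
    rcases Finset.mem_union.mp hr with hr | hr
    · have := ih hr; omega
    · have := num_den_of_mem_slopesOfHeight (by omega) hr; omega

lemma sum_den_slopeFinset (q : ℕ) :
    ∑ r ∈ slopeFinset q, r.den = (q + 1) ^ 2 + 3 * (q + 1) - 1 := by
  induction q with
  | zero => rfl
  | succ q ih =>
    have hdisj : Disjoint (slopeFinset q) (slopesOfHeight (q + 2)) :=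
      Finset.disjoint_left.mpr fun r hr hr' => by
        have := den_le_and_natAbs_num_le_of_mem_slopeFinset hr
        have := num_den_of_mem_slopesOfHeight (by omega) hr'
        omega
    rw [slopeFinset, Finset.sum_union hdisj, ih, sum_den_slopesOfHeight (by omega)]
    ring_nf
    omega

theorem rk_unique_of_le_general (n q : ℕ) (hq : 0 < q)
    (hnq : n ≤ q ^ 2 + 3 * q - 1) :
    ∀ f g : ℤ × ℤ → ℝ, ClueEquiv n n (slopesUpTo q) f g →
      ∀ p : ℤ × ℤ, 1 ≤ p.1 → p.1 ≤ (n : ℤ) → 1 ≤ p.2 → p.2 ≤ (n : ℤ) → f p = g p := by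
  intro f g hfg p hp1 hp2 hp3 hp4
  obtain ⟨q, rfl⟩ := Nat.exists_eq_add_one_of_ne_zero hq.ne'
  have hwidth : (n : ℤ) ≤ ∑ r ∈ slopeFinset q, (slopeDir r).1 := by
    have := sum_den_slopeFinset q
    simp only [slopeDir]
    norm_cast
    omega
  have hzero : (grid n n : Set (ℤ × ℤ)).indicator (f - g) = 0 := by
    refine eq_zero_of_lineSum_eq_zero (slopeFinset q) slopeDir (fun r _ => slopeDir_fst_pos r)
      (pairwise_slopeDir_not_parallel _) ((grid n n).finite_toSet.subset support_indicator_subset)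
      1 (fun x hx => ?_) fun r hr x => ?_
    · have := support_indicator_subset hx
      simp only [grid, Finset.coe_product, Finset.coe_Icc, mem_prod, mem_Icc] at this
      simp only [mem_preimage, mem_Ico]
      omega
    · rw [← clueSum_eq_lineSum, clueSum_sub, hfg _ (mem_slopesUpTo_of_mem_slopeFinset hr),
        sub_self]
  have hp : p ∈ (grid n n : Set (ℤ × ℤ)) := by
    simp only [grid, Finset.coe_product, Finset.coe_Icc, mem_prod, mem_Icc]
    exact ⟨⟨hp1, hp2⟩, hp3, hp4⟩
  simpa [indicator_of_mem hp, sub_eq_zero] using congrFun hzero p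

/-- if `n ≤ q² + 3q − 1` then every entry of `I_{n,n}` is uniquely solvable
with respect to `T = {0, ∞} ∪ {k : 1 ≤ |k| ≤ q} ∪ {1/k : 1 ≤ |k| ≤ q}`; equivalently every
solvable `n × n` RK puzzle with these clue slopes has a unique solution. -/
theorem rk_unique_of_le (n q : ℕ) (hn : 0 < n) (hq : 0 < q)
    (hnq : n ≤ q ^ 2 + 3 * q - 1) :
    ∀ f g : ℤ × ℤ → ℝ, ClueEquiv n n (slopesUpTo q) f g →
      ∀ p : ℤ × ℤ, 1 ≤ p.1 → p.1 ≤ (n : ℤ) → 1 ≤ p.2 → p.2 ≤ (n : ℤ) → f p = g p :=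
  rk_unique_of_le_general n q hq hnq
end

section
/- For all positive integers n and m, s_{n,m} = k_{n,m}. -/
open Classical

/-- The enumeration `σ` of the slope set `S = ℤ ∪ {1/k : k ≠ 0} ∪ {∞}` realizing the order
`0 ≺ ∞ ≺ −1 ≺ 1 ≺ −1/2 ≺ −2 ≺ 1/2 ≺ 2 ≺ −1/3 ≺ −3 ≺ 1/3 ≺ 3 ≺ ⋯`:
`σ 0 = 0`, `σ 1 = ∞`, `σ 2 = −1`, `σ 3 = 1`, and for `q ≥ 2`,
`σ (4q−4) = −1/q`, `σ (4q−3) = −q`, `σ (4q−2) = 1/q`, `σ (4q−1) = q`. -/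
def sigmaSlope : ℕ → Slope
  | 0 => some 0
  | 1 => none
  | 2 => some (-1)
  | 3 => some 1
  | (a + 4) =>
    let q : ℚ := ((a / 4 + 2 : ℕ) : ℚ)
    match a % 4 with
    | 0 => some (-(1 / q))
    | 1 => some (-q)
    | 2 => some (1 / q)
    | _ => some q

/-- `C_{σ(a)} = {t ∈ S : t ⪯ σ(a)}`, the set of the first `a + 1` slopes. -/
def CSet (a : ℕ) : Set Slope := sigmaSlope '' Set.Iic a

/-- Either every entry of the first row or every entry of the last row of `I_{n,m}` is
uniquely solvable with respect to `C_{σ(a)}`. -/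
def RowOK (n m a : ℕ) : Prop :=
  (∀ i : ℤ, 1 ≤ i → i ≤ (n : ℤ) → UniqSolv n m (CSet a) (i, 1)) ∨
  (∀ i : ℤ, 1 ≤ i → i ≤ (n : ℤ) → UniqSolv n m (CSet a) (i, (m : ℤ)))

/-- Either every entry of the first column or every entry of the last column of `I_{n,m}` is
uniquely solvable with respect to `C_{σ(a)}`. -/
def ColOK (n m a : ℕ) : Prop :=
  (∀ j : ℤ, 1 ≤ j → j ≤ (m : ℤ) → UniqSolv n m (CSet a) (1, j)) ∨
  (∀ j : ℤ, 1 ≤ j → j ≤ (m : ℤ) → UniqSolv n m (CSet a) ((n : ℤ), j))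

/-- The index (in the enumeration `σ`) of the invariant `r_{n,m}`: the ⪯-least `s ∈ S` such
that either the first or the last row of `I_{n,m}` is uniquely solvable w.r.t. `C_s`. -/
noncomputable def rInv (n m : ℕ) : ℕ := sInf {a | RowOK n m a}

/-- The index of the invariant `c_{n,m}`: the ⪯-least `s ∈ S` such that either the first or
the last column of `I_{n,m}` is uniquely solvable w.r.t. `C_s`. -/
noncomputable def cInv (n m : ℕ) : ℕ := sInf {a | ColOK n m a}

/-- The index of the invariant `s_{n,m} = min{r_{n,m}, c_{n,m}}`. -/
noncomputable def sInv (n m : ℕ) : ℕ := min (rInv n m) (cInv n m)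

/-- The index of the invariant `k_{n,m}`: the ⪯-least `s ∈ S` such that every entry of
`I_{n,m}` is uniquely solvable w.r.t. `C_s`. -/
noncomputable def kInv (n m : ℕ) : ℕ :=
  sInf {a | ∀ p : ℤ × ℤ, 1 ≤ p.1 → p.1 ≤ (n : ℤ) → 1 ≤ p.2 → p.2 ≤ (m : ℤ) →
    UniqSolv n m (CSet a) p}

/-- The index of the invariant `b_{n,m}`: the ⪯-least `s ∈ S` such that every entry of the
border `B_{n,m} = ({1,n} × I_m) ∪ (I_n × {1,m})` is uniquely solvable w.r.t. `C_s`. -/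
noncomputable def bInv (n m : ℕ) : ℕ :=
  sInf {a | ∀ p : ℤ × ℤ, 1 ≤ p.1 → p.1 ≤ (n : ℤ) → 1 ≤ p.2 → p.2 ≤ (m : ℤ) →
    (p.1 = 1 ∨ p.1 = (n : ℤ) ∨ p.2 = 1 ∨ p.2 = (m : ℤ)) →
    UniqSolv n m (CSet a) p}
/-! A function with zero clues along every line of a slope set is a ghost; an entry fails to be
uniquely solvable exactly when some ghost supported in the grid is nonzero there. Translating a
ghost maps lines to lines of the same slope, so as long as its support stays inside the grid it
remains a ghost. Translating the support of a ghost until it touches the first (or last) row or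
column therefore shows that if some entry is not uniquely solvable, then neither is some entry of
each of the four sides. Hence "first or last row uniquely solvable" and "first or last column
uniquely solvable" both mean "every entry uniquely solvable", and `r = c = k`. -/

namespace Tomography

noncomputable def grid (n m : ℕ) : Finset (ℤ × ℤ) := Finset.Icc 1 (n : ℤ) ×ˢ Finset.Icc 1 (m : ℤ)

def OnLine : Slope → ℝ → ℤ × ℤ → Prop
  | none, c, p => (p.1 : ℝ) = c
  | some r, c, p => (p.2 : ℝ) = r * p.1 + c

def HasZeroClues (n m : ℕ) (T : Set Slope) (h : ℤ × ℤ → ℝ) : Prop :=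
  ∀ s ∈ T, ∀ c : ℝ, clueSum n m s c h = 0

variable {n m : ℕ} {T : Set Slope}

lemma mem_grid {p : ℤ × ℤ} :
    p ∈ grid n m ↔ 1 ≤ p.1 ∧ p.1 ≤ n ∧ 1 ≤ p.2 ∧ p.2 ≤ m := by
  simp only [grid, Finset.mem_product, Finset.mem_Icc, and_assoc]

lemma clueSum_eq_sum_onLine (s : Slope) (c : ℝ) (f : ℤ × ℤ → ℝ) :
    clueSum n m s c f = ∑ p ∈ (grid n m).filter (OnLine s c), f p := by
  cases s <;> rfl

lemma exists_onLine_add_iff (s : Slope) (c : ℝ) (v : ℤ × ℤ) :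
    ∃ c' : ℝ, ∀ p, OnLine s c' (p + v) ↔ OnLine s c p := by
  cases s with
  | none => exact ⟨c + v.1, fun p => by simp [OnLine]⟩
  | some r =>
    refine ⟨c + v.2 - r * v.1, fun p => ?_⟩
    simp only [OnLine, Prod.fst_add, Prod.snd_add, Int.cast_add]
    constructor <;> intro h <;> linarith

lemma exists_clueSum_comp_add_eq {h : ℤ × ℤ → ℝ} {v : ℤ × ℤ}
    (hsupp : ∀ q, h q ≠ 0 → q ∈ grid n m ∧ q - v ∈ grid n m) (s : Slope) (c : ℝ) :
    ∃ c' : ℝ, clueSum n m s c (fun p => h (p + v)) = clueSum n m s c' h := by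
  obtain ⟨c', hc'⟩ := exists_onLine_add_iff s c v
  refine ⟨c', ?_⟩
  rw [clueSum_eq_sum_onLine, clueSum_eq_sum_onLine]
  refine Finset.sum_bij_ne_zero (fun p _ _ => p + v) ?_ ?_ ?_ (fun _ _ _ => rfl)
  · intro p hp hne
    rw [Finset.mem_filter, hc']
    exact ⟨(hsupp _ hne).1, (Finset.mem_filter.mp hp).2⟩
  · intro _ _ _ _ _ _ h
    exact add_right_cancel h
  · rintro q hq hne
    refine ⟨q - v, ?_, by simpa using hne, sub_add_cancel q v⟩
    rw [Finset.mem_filter, ← hc', sub_add_cancel]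
    exact ⟨(hsupp q hne).2, (Finset.mem_filter.mp hq).2⟩

lemma uniqSolv_iff {p : ℤ × ℤ} :
    UniqSolv n m T p ↔ ∀ h, HasZeroClues n m T h → h p = 0 := by
  have clueSum_sub (s c) (f g : ℤ × ℤ → ℝ) :
      clueSum n m s c (fun q => f q - g q) = clueSum n m s c f - clueSum n m s c g :=
    Finset.sum_sub_distrib ..
  refine ⟨fun H h hh => H h 0 fun s hs c => ?_, fun H f g hfg => ?_⟩
  · rw [hh s hs c]
    exact Finset.sum_const_zero.symm
  · have := H (fun q => f q - g q) fun s hs c => by rw [clueSum_sub, hfg s hs c, sub_self]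
    exact sub_eq_zero.mp this

lemma exists_ghost_of_not_uniqSolv {p : ℤ × ℤ} (hp : p ∈ grid n m)
    (hnot : ¬UniqSolv n m T p) :
    ∃ h, HasZeroClues n m T h ∧ (∀ q, h q ≠ 0 → q ∈ grid n m) ∧ h p ≠ 0 := by
  rw [uniqSolv_iff] at hnot
  push Not at hnot
  obtain ⟨h, hh, hhp⟩ := hnot
  refine ⟨fun q => if q ∈ grid n m then h q else 0, fun s hs c => ?_,
    fun q hq => by_contra fun hq' => hq (if_neg hq'), by simpa [hp] using hhp⟩
  rw [← hh s hs c, clueSum_eq_sum_onLine, clueSum_eq_sum_onLine]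
  exact Finset.sum_congr rfl fun q hq => if_pos (Finset.mem_filter.mp hq).1

lemma not_uniqSolv_of_ghost_add {h : ℤ × ℤ → ℝ} {v p : ℤ × ℤ} (hh : HasZeroClues n m T h)
    (hsupp : ∀ q, h q ≠ 0 → q ∈ grid n m ∧ q - v ∈ grid n m) (hpv : h (p + v) ≠ 0) :
    ¬UniqSolv n m T p := by
  rw [uniqSolv_iff]
  push Not
  refine ⟨fun q => h (q + v), fun s hs c => ?_, hpv⟩
  obtain ⟨c', hc'⟩ := exists_clueSum_comp_add_eq hsupp s c
  rw [hc', hh s hs c']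

lemma exists_ghost_minimizing {p : ℤ × ℤ} (hp : p ∈ grid n m) (hnot : ¬UniqSolv n m T p)
    (φ : ℤ × ℤ → ℤ) :
    ∃ h, HasZeroClues n m T h ∧ (∀ q, h q ≠ 0 → q ∈ grid n m) ∧
      ∃ q, h q ≠ 0 ∧ ∀ q', h q' ≠ 0 → φ q ≤ φ q' := by
  obtain ⟨h, hh, hsupp, hhp⟩ := exists_ghost_of_not_uniqSolv hp hnot
  obtain ⟨q, hq, hmin⟩ := ((grid n m).filter (h · ≠ 0)).exists_min_image φ
    ⟨p, Finset.mem_filter.mpr ⟨hp, hhp⟩⟩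
  exact ⟨h, hh, hsupp, q, (Finset.mem_filter.mp hq).2,
    fun q' hq' => hmin q' (Finset.mem_filter.mpr ⟨hsupp q' hq', hq'⟩)⟩

lemma exists_not_uniqSolv_on_rows {p : ℤ × ℤ} (hp : p ∈ grid n m)
    (hnot : ¬UniqSolv n m T p) :
    (∃ i, 1 ≤ i ∧ i ≤ (n : ℤ) ∧ ¬UniqSolv n m T (i, 1)) ∧
    (∃ i, 1 ≤ i ∧ i ≤ (n : ℤ) ∧ ¬UniqSolv n m T (i, m)) := by
  constructor
  · obtain ⟨h, hh, hsupp, q, hhq, hmin⟩ := exists_ghost_minimizing hp hnot Prod.snd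
    have := mem_grid.mp (hsupp q hhq)
    refine ⟨q.1, by omega, by omega, not_uniqSolv_of_ghost_add (v := (0, q.2 - 1)) hh
      (fun q' hq' => ⟨hsupp q' hq', ?_⟩) (by simpa using hhq)⟩
    have := hmin q' hq'
    have := mem_grid.mp (hsupp q' hq')
    simp only [mem_grid, Prod.fst_sub, Prod.snd_sub]
    omega
  · obtain ⟨h, hh, hsupp, q, hhq, hmax⟩ := exists_ghost_minimizing hp hnot (- ·.2)
    have := mem_grid.mp (hsupp q hhq)
    refine ⟨q.1, by omega, by omega, not_uniqSolv_of_ghost_add (v := (0, q.2 - m)) hh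
      (fun q' hq' => ⟨hsupp q' hq', ?_⟩) (by simpa using hhq)⟩
    have := hmax q' hq'
    have := mem_grid.mp (hsupp q' hq')
    simp only [mem_grid, Prod.fst_sub, Prod.snd_sub]
    omega

lemma exists_not_uniqSolv_on_cols {p : ℤ × ℤ} (hp : p ∈ grid n m)
    (hnot : ¬UniqSolv n m T p) :
    (∃ j, 1 ≤ j ∧ j ≤ (m : ℤ) ∧ ¬UniqSolv n m T (1, j)) ∧
    (∃ j, 1 ≤ j ∧ j ≤ (m : ℤ) ∧ ¬UniqSolv n m T (n, j)) := by
  constructor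
  · obtain ⟨h, hh, hsupp, q, hhq, hmin⟩ := exists_ghost_minimizing hp hnot Prod.fst
    have := mem_grid.mp (hsupp q hhq)
    refine ⟨q.2, by omega, by omega, not_uniqSolv_of_ghost_add (v := (q.1 - 1, 0)) hh
      (fun q' hq' => ⟨hsupp q' hq', ?_⟩) (by simpa using hhq)⟩
    have := hmin q' hq'
    have := mem_grid.mp (hsupp q' hq')
    simp only [mem_grid, Prod.fst_sub, Prod.snd_sub]
    omega
  · obtain ⟨h, hh, hsupp, q, hhq, hmax⟩ := exists_ghost_minimizing hp hnot (- ·.1)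
    have := mem_grid.mp (hsupp q hhq)
    refine ⟨q.2, by omega, by omega, not_uniqSolv_of_ghost_add (v := (q.1 - n, 0)) hh
      (fun q' hq' => ⟨hsupp q' hq', ?_⟩) (by simpa using hhq)⟩
    have := hmax q' hq'
    have := mem_grid.mp (hsupp q' hq')
    simp only [mem_grid, Prod.fst_sub, Prod.snd_sub]
    omega

lemma rowOK_iff (hm : 0 < m) {a : ℕ} :
    RowOK n m a ↔ ∀ p : ℤ × ℤ, 1 ≤ p.1 → p.1 ≤ (n : ℤ) → 1 ≤ p.2 → p.2 ≤ (m : ℤ) →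
      UniqSolv n m (CSet a) p := by
  refine ⟨fun hrow p h1 h2 h3 h4 => by_contra fun hnot => ?_,
    fun hall => Or.inl fun i h1 h2 => hall (i, 1) h1 h2 le_rfl (by omega)⟩
  obtain ⟨⟨i, hi1, hi2, hi⟩, ⟨i', hi1', hi2', hi'⟩⟩ :=
    exists_not_uniqSolv_on_rows (mem_grid.mpr ⟨h1, h2, h3, h4⟩) hnot
  exact hrow.elim (fun h => hi (h i hi1 hi2)) (fun h => hi' (h i' hi1' hi2'))

lemma colOK_iff (hn : 0 < n) {a : ℕ} :
    ColOK n m a ↔ ∀ p : ℤ × ℤ, 1 ≤ p.1 → p.1 ≤ (n : ℤ) → 1 ≤ p.2 → p.2 ≤ (m : ℤ) →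
      UniqSolv n m (CSet a) p := by
  refine ⟨fun hcol p h1 h2 h3 h4 => by_contra fun hnot => ?_,
    fun hall => Or.inl fun j h1 h2 => hall (1, j) le_rfl (by omega) h1 h2⟩
  obtain ⟨⟨j, hj1, hj2, hj⟩, ⟨j', hj1', hj2', hj'⟩⟩ :=
    exists_not_uniqSolv_on_cols (mem_grid.mpr ⟨h1, h2, h3, h4⟩) hnot
  exact hcol.elim (fun h => hj (h j hj1 hj2)) (fun h => hj' (h j' hj1' hj2'))

end Tomography

/-- `s_{n,m} = k_{n,m}`. -/
theorem sInv_eq_kInv (n m : ℕ) (hn : 0 < n) (hm : 0 < m) :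
    sInv n m = kInv n m := by
  have hr : rInv n m = kInv n m := congrArg sInf (Set.ext fun _ => Tomography.rowOK_iff hm)
  have hc : cInv n m = kInv n m := congrArg sInf (Set.ext fun _ => Tomography.colOK_iff hn)
  rw [sInv, hr, hc, min_self]
end

section
/- For all positive integers n and m, r_{n,m} = c_{n,m} = k_{n,m} = b_{n,m} = s_{n,m}. -/
/-!
An entry of the grid fails to be uniquely solvable exactly when some *ghost* — a function
supported on the grid all of whose clues vanish — is nonzero there, since the difference of two
clue-equivalent functions, cut off to the grid, is a ghost. A translated line is a line of the same
slope, so a ghost translated to stay inside the grid is again a ghost. Pushing a nonzero ghost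
against any side of the grid therefore makes an entry of that side not uniquely solvable. Hence
`r`, `c`, `k` and `b` are all the least `s` for which `C_s` admits no nonzero ghost.
-/

open Classical

namespace DiscreteTomography

open Function

variable {n m : ℕ} {T : Set Slope}

noncomputable def grid (n m : ℕ) : Finset (ℤ × ℤ) :=
  Finset.Icc (1 : ℤ) n ×ˢ Finset.Icc (1 : ℤ) m

lemma mem_grid {p : ℤ × ℤ} :
    p ∈ grid n m ↔ p.1 ∈ Set.Icc 1 (n : ℤ) ∧ p.2 ∈ Set.Icc 1 (m : ℤ) := by
  simp [grid]

def OnLine (s : Slope) (c : ℝ) (p : ℤ × ℤ) : Prop :=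
  match s with
  | none => (p.1 : ℝ) = c
  | some r => (p.2 : ℝ) = (r : ℝ) * (p.1 : ℝ) + c

lemma exists_onLine_iff_add (s : Slope) (c : ℝ) (v : ℤ × ℤ) :
    ∃ c' : ℝ, ∀ p, OnLine s c p ↔ OnLine s c' (p + v) := by
  cases s with
  | none =>
    refine ⟨c + v.1, fun p => ?_⟩
    simp only [OnLine, Prod.fst_add, Int.cast_add]
    constructor <;> intro <;> linarith
  | some r =>
    refine ⟨c + v.2 - r * v.1, fun p => ?_⟩
    simp only [OnLine, Prod.fst_add, Prod.snd_add, Int.cast_add]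
    constructor <;> intro <;> linarith

lemma clueSum_eq_finsum {h : ℤ × ℤ → ℝ} (hh : support h ⊆ grid n m)
    (s : Slope) (c : ℝ) :
    clueSum n m s c h = ∑ᶠ p, if OnLine s c p then h p else 0 := by
  show ∑ p ∈ (grid n m).filter (OnLine s c), h p = _
  rw [Finset.sum_filter, finsum_eq_sum_of_support_subset]
  intro p hp
  by_contra hp'
  simp [notMem_support.1 (mt (@hh p) hp')] at hp

lemma clueSum_sub (s : Slope) (c : ℝ) (f g : ℤ × ℤ → ℝ) :
    clueSum n m s c f - clueSum n m s c g = clueSum n m s c (f - g) :=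
  (Finset.sum_sub_distrib _ _).symm

lemma exists_clueSum_comp_add {h : ℤ × ℤ → ℝ} {v : ℤ × ℤ}
    (hh : support h ⊆ grid n m) (hv : support (fun p => h (p + v)) ⊆ grid n m)
    (s : Slope) (c : ℝ) :
    ∃ c', clueSum n m s c (fun p => h (p + v)) = clueSum n m s c' h := by
  obtain ⟨c', hc'⟩ := exists_onLine_iff_add s c v
  refine ⟨c', ?_⟩
  rw [clueSum_eq_finsum hv, clueSum_eq_finsum hh]
  simp_rw [hc']
  exact finsum_comp_equiv (Equiv.addRight v) (f := fun q => if OnLine s c' q then h q else 0)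

def IsGhost (n m : ℕ) (T : Set Slope) (h : ℤ × ℤ → ℝ) : Prop :=
  support h ⊆ grid n m ∧ ∀ s ∈ T, ∀ c, clueSum n m s c h = 0

def HasGhost (n m : ℕ) (T : Set Slope) : Prop :=
  ∃ h, IsGhost n m T h ∧ h ≠ 0

lemma IsGhost.comp_add {h : ℤ × ℤ → ℝ} (hg : IsGhost n m T h) {v : ℤ × ℤ}
    (hv : support (fun p => h (p + v)) ⊆ grid n m) :
    IsGhost n m T (fun p => h (p + v)) := by
  refine ⟨hv, fun s hs c => ?_⟩
  obtain ⟨c', hc'⟩ := exists_clueSum_comp_add hg.1 hv s c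
  rw [hc', hg.2 s hs c']

lemma IsGhost.apply_eq_zero {h : ℤ × ℤ → ℝ} (hg : IsGhost n m T h) {p : ℤ × ℤ}
    (hp : UniqSolv n m T p) : h p = 0 :=
  hp h 0 fun s hs c => by rw [hg.2 s hs c]; exact Finset.sum_const_zero.symm

lemma uniqSolv_of_not_hasGhost (hT : ¬HasGhost n m T) {p : ℤ × ℤ} (hp : p ∈ grid n m) :
    UniqSolv n m T p := by
  intro f g hfg
  set h := (grid n m : Set (ℤ × ℤ)).indicator (f - g)
  have hclue (s : Slope) (c : ℝ) : clueSum n m s c h = clueSum n m s c (f - g) :=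
    Finset.sum_congr rfl fun q hq =>
      Set.indicator_of_mem (Finset.mem_coe.2 (Finset.mem_filter.1 hq).1) _
  have hg : IsGhost n m T h := ⟨Set.support_indicator_subset, fun s hs c => by
    rw [hclue, ← clueSum_sub, hfg s hs c, sub_self]⟩
  have hzero : h = 0 := by
    by_contra hne
    exact hT ⟨h, hg, hne⟩
  have hp' : h p = f p - g p := Set.indicator_of_mem (Finset.mem_coe.2 hp) _
  rw [hzero, Pi.zero_apply] at hp'
  linarith

lemma IsGhost.not_uniqSolv_sub {h : ℤ × ℤ → ℝ} (hg : IsGhost n m T h) {v q : ℤ × ℤ}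
    (hv : ∀ p ∈ support h, p - v ∈ grid n m) (hq : h q ≠ 0) :
    ¬UniqSolv n m T (q - v) := by
  have hg' : IsGhost n m T (fun p => h (p + v)) :=
    hg.comp_add fun p hp => by simpa using hv (p + v) hp
  exact fun hu => hq (by simpa using hg'.apply_eq_zero hu)

lemma exists_sub_mem_Icc_and_add_mem {a b t : ℤ} {S : Finset ℤ} (hS : S.Nonempty)
    (hSab : ∀ x ∈ S, x ∈ Set.Icc a b) (ht : t = a ∨ t = b) :
    ∃ d, (∀ x ∈ S, x - d ∈ Set.Icc a b) ∧ t + d ∈ S := by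
  rcases ht with rfl | rfl
  · refine ⟨S.min' hS - t, fun x hx => ?_, by simpa using S.min'_mem hS⟩
    have := S.min'_le x hx
    have := hSab _ (S.min'_mem hS)
    have := hSab x hx
    simp only [Set.mem_Icc] at *
    omega
  · refine ⟨S.max' hS - t, fun x hx => ?_, by simpa using S.max'_mem hS⟩
    have := S.le_max' x hx
    have := hSab _ (S.max'_mem hS)
    have := hSab x hx
    simp only [Set.mem_Icc] at *
    omega

lemma IsGhost.filter_ne_zero_nonempty {h : ℤ × ℤ → ℝ} (hg : IsGhost n m T h) (hne : h ≠ 0) :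
    ((grid n m).filter (h · ≠ 0)).Nonempty := by
  obtain ⟨p, hp⟩ := Function.ne_iff.1 hne
  exact ⟨p, Finset.mem_filter.2 ⟨hg.1 hp, hp⟩⟩

lemma HasGhost.exists_not_uniqSolv_row (hT : HasGhost n m T) {t : ℤ} (ht : t = 1 ∨ t = m) :
    ∃ i ∈ Set.Icc 1 (n : ℤ), ¬UniqSolv n m T (i, t) := by
  obtain ⟨h, hg, hne⟩ := hT
  set P := (grid n m).filter (h · ≠ 0)
  obtain ⟨d, hd, htd⟩ := exists_sub_mem_Icc_and_add_mem ((hg.filter_ne_zero_nonempty hne).image _)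
    (S := P.image Prod.snd) (by simp +contextual [P, mem_grid]) ht
  obtain ⟨q, hq, hqt⟩ := Finset.mem_image.1 htd
  have hqP := Finset.mem_filter.1 hq
  refine ⟨q.1, (mem_grid.1 hqP.1).1, ?_⟩
  have hv : ∀ p ∈ support h, p - (0, d) ∈ grid n m := fun p hp =>
    mem_grid.2 ⟨by simpa using (mem_grid.1 (hg.1 hp)).1,
      hd _ (Finset.mem_image_of_mem _ (Finset.mem_filter.2 ⟨hg.1 hp, hp⟩))⟩
  convert hg.not_uniqSolv_sub hv hqP.2 using 2
  ext <;> simp; omega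

lemma HasGhost.exists_not_uniqSolv_col (hT : HasGhost n m T) {t : ℤ} (ht : t = 1 ∨ t = n) :
    ∃ j ∈ Set.Icc 1 (m : ℤ), ¬UniqSolv n m T (t, j) := by
  obtain ⟨h, hg, hne⟩ := hT
  set P := (grid n m).filter (h · ≠ 0)
  obtain ⟨d, hd, htd⟩ := exists_sub_mem_Icc_and_add_mem ((hg.filter_ne_zero_nonempty hne).image _)
    (S := P.image Prod.fst) (by simp +contextual [P, mem_grid]) ht
  obtain ⟨q, hq, hqt⟩ := Finset.mem_image.1 htd
  have hqP := Finset.mem_filter.1 hq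
  refine ⟨q.2, (mem_grid.1 hqP.1).2, ?_⟩
  have hv : ∀ p ∈ support h, p - (d, 0) ∈ grid n m := fun p hp =>
    mem_grid.2 ⟨hd _ (Finset.mem_image_of_mem _ (Finset.mem_filter.2 ⟨hg.1 hp, hp⟩)),
      by simpa using (mem_grid.1 (hg.1 hp)).2⟩
  convert hg.not_uniqSolv_sub hv hqP.2 using 2
  ext <;> simp; omega

lemma forall_uniqSolv_iff (hm : 0 < m) :
    (∀ p : ℤ × ℤ, 1 ≤ p.1 → p.1 ≤ (n : ℤ) → 1 ≤ p.2 → p.2 ≤ (m : ℤ) → UniqSolv n m T p) ↔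
      ¬HasGhost n m T := by
  refine ⟨fun h hT => ?_, fun hT p h₁ h₂ h₃ h₄ => uniqSolv_of_not_hasGhost hT
    (mem_grid.2 ⟨⟨h₁, h₂⟩, h₃, h₄⟩)⟩
  obtain ⟨i, hi, hns⟩ := hT.exists_not_uniqSolv_row (Or.inl rfl)
  exact hns (h _ hi.1 hi.2 le_rfl (Nat.one_le_cast.2 hm))

lemma forall_border_uniqSolv_iff (hm : 0 < m) :
    (∀ p : ℤ × ℤ, 1 ≤ p.1 → p.1 ≤ (n : ℤ) → 1 ≤ p.2 → p.2 ≤ (m : ℤ) →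
      (p.1 = 1 ∨ p.1 = (n : ℤ) ∨ p.2 = 1 ∨ p.2 = (m : ℤ)) → UniqSolv n m T p) ↔
      ¬HasGhost n m T := by
  refine ⟨fun h hT => ?_, fun hT p h₁ h₂ h₃ h₄ _ => uniqSolv_of_not_hasGhost hT
    (mem_grid.2 ⟨⟨h₁, h₂⟩, h₃, h₄⟩)⟩
  obtain ⟨i, hi, hns⟩ := hT.exists_not_uniqSolv_row (Or.inl rfl)
  exact hns (h _ hi.1 hi.2 le_rfl (Nat.one_le_cast.2 hm) (by simp))

lemma rowOK_iff (hm : 0 < m) (a : ℕ) : RowOK n m a ↔ ¬HasGhost n m (CSet a) := by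
  refine ⟨?_, fun hT => Or.inl fun i h₁ h₂ => uniqSolv_of_not_hasGhost hT
    (mem_grid.2 ⟨⟨h₁, h₂⟩, le_rfl, Nat.one_le_cast.2 hm⟩)⟩
  rintro (h | h) hT
  · obtain ⟨i, hi, hns⟩ := hT.exists_not_uniqSolv_row (Or.inl rfl)
    exact hns (h i hi.1 hi.2)
  · obtain ⟨i, hi, hns⟩ := hT.exists_not_uniqSolv_row (Or.inr rfl)
    exact hns (h i hi.1 hi.2)

lemma colOK_iff (hn : 0 < n) (a : ℕ) : ColOK n m a ↔ ¬HasGhost n m (CSet a) := by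
  refine ⟨?_, fun hT => Or.inl fun j h₁ h₂ => uniqSolv_of_not_hasGhost hT
    (mem_grid.2 ⟨⟨le_rfl, Nat.one_le_cast.2 hn⟩, h₁, h₂⟩)⟩
  rintro (h | h) hT
  · obtain ⟨j, hj, hns⟩ := hT.exists_not_uniqSolv_col (Or.inl rfl)
    exact hns (h j hj.1 hj.2)
  · obtain ⟨j, hj, hns⟩ := hT.exists_not_uniqSolv_col (Or.inr rfl)
    exact hns (h j hj.1 hj.2)

end DiscreteTomography

/-- `r_{n,m} = c_{n,m} = k_{n,m} = b_{n,m} = s_{n,m}`. -/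
theorem invariants_eq (n m : ℕ) (hn : 0 < n) (hm : 0 < m) :
    rInv n m = cInv n m ∧ cInv n m = kInv n m ∧ kInv n m = bInv n m ∧
      bInv n m = sInv n m := by
  open DiscreteTomography in
  set g := sInf {a | ¬HasGhost n m (CSet a)}
  have hr : rInv n m = g := congrArg sInf (Set.ext (rowOK_iff hm))
  have hc : cInv n m = g := congrArg sInf (Set.ext (colOK_iff hn))
  have hk : kInv n m = g := congrArg sInf (Set.ext fun _ => forall_uniqSolv_iff hm)
  have hb : bInv n m = g := congrArg sInf (Set.ext fun _ => forall_border_uniqSolv_iff hm)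
  simp only [sInv, hr, hc, hk, hb, min_self, and_self]
end

section
/- Let n and q be positive integers and let T be a set of slopes with −1/q ∈ T. Let ω = (w_1, …, w_m) be a sequence of non-negative integers with m ≤ n and ω(1,m) ≤ n, and suppose every entry of J_ω is uniquely solvable with respect to T on I_{n,n}. Let 1 ≤ j ≤ m+1 be such that the point (ω(j,m)+1, j) lies in I_{n,n}. If tq ≥ ω(j, j+t−1) + 1 for all 1 ≤ t ≤ m−j+1, and tq + 1 ≤ ω(j−t, j−1) for all 1 ≤ t ≤ j−1, then the entry (ω(j,m)+1, j) is uniquely solvable with respect to T on I_{n,n}. -/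
open Classical

/-- `ω(i,j) = ∑_{k=i}^{j} w_k` (equal to `0` when `i > j`). -/
def wSum (w : ℕ → ℕ) (i j : ℕ) : ℕ := ∑ k ∈ Finset.Icc i j, w k

/-!
The line of slope `-1/q` through `P = (ω(j,m)+1, j)` is `x + q y = ω(j,m) + 1 + q j`. Going
down `t` rows from `P` moves it `t q` to the right, which `(**)` keeps within the staircase
`J_ω`; going up `t` rows moves it `t q` to the left, and `(*)` makes it either stay in `J_ω`
or leave the grid. So every other grid point of that line is uniquely solvable, and the clue
along the line determines the entry at `P`.
-/

lemma wSum_add_wSum (w : ℕ → ℕ) {a b c : ℕ} (hab : a ≤ b + 1) (hbc : b ≤ c) :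
    wSum w a b + wSum w (b + 1) c = wSum w a c := by
  simp only [wSum, ← Order.succ_eq_add_one, ← Finset.Ico_succ_right_eq_Icc]
  exact Finset.sum_Ico_consecutive w hab (Order.succ_le_succ hbc)

lemma wSum_eq_zero_of_lt (w : ℕ → ℕ) {a b : ℕ} (h : b < a) : wSum w a b = 0 := by
  simp [wSum, Finset.Icc_eq_empty_of_lt h]

noncomputable def linePoints (n m : ℕ) (s : Slope) (c : ℝ) : Finset (ℤ × ℤ) :=
  (Finset.Icc (1 : ℤ) n ×ˢ Finset.Icc (1 : ℤ) m).filter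
    (fun p => match s with
      | none => (p.1 : ℝ) = c
      | some r => (p.2 : ℝ) = (r : ℝ) * (p.1 : ℝ) + c)

lemma clueSum_eq_sum_linePoints (n m : ℕ) (s : Slope) (c : ℝ) (f : ℤ × ℤ → ℝ) :
    clueSum n m s c f = ∑ p ∈ linePoints n m s c, f p :=
  rfl

lemma UniqSolv.of_line {n m : ℕ} {T : Set Slope} {s : Slope} {c : ℝ} {p : ℤ × ℤ}
    (hs : s ∈ T) (hp : p ∈ linePoints n m s c)
    (hline : ∀ p' ∈ linePoints n m s c, p' ≠ p → UniqSolv n m T p') :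
    UniqSolv n m T p := by
  intro f g hfg
  have hclue := hfg s hs c
  rw [clueSum_eq_sum_linePoints, clueSum_eq_sum_linePoints,
    ← Finset.add_sum_erase _ _ hp, ← Finset.add_sum_erase _ _ hp,
    Finset.sum_congr rfl fun p' hp' =>
      hline p' (Finset.mem_of_mem_erase hp') (Finset.ne_of_mem_erase hp') f g hfg] at hclue
  exact add_right_cancel hclue

lemma mem_linePoints_neg_inv_iff {n m q : ℕ} (hq : q ≠ 0) (x₀ y₀ : ℤ) (p : ℤ × ℤ) :
    p ∈ linePoints n m (some (-(1 / (q : ℚ)))) ((y₀ : ℝ) + (x₀ : ℝ) / q) ↔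
      (p.1 ∈ Finset.Icc (1 : ℤ) n ∧ p.2 ∈ Finset.Icc (1 : ℤ) m) ∧
        p.1 + q * p.2 = x₀ + q * y₀ := by
  have hqR : (q : ℝ) ≠ 0 := Nat.cast_ne_zero.mpr hq
  have hline : (p.2 : ℝ) = ((-(1 / (q : ℚ)) : ℚ) : ℝ) * p.1 + (y₀ + x₀ / q) ↔
      ((p.1 + q * p.2 : ℤ) : ℝ) = ((x₀ + q * y₀ : ℤ) : ℝ) := by
    push_cast
    constructor <;> intro h
    · rw [h]; field_simp; ring
    · field_simp; linear_combination h
  simp only [linePoints, Finset.mem_filter, Finset.mem_product, hline, Int.cast_inj]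

section Staircase

variable {w : ℕ → ℕ} {m q j : ℕ}

lemma le_wSum_of_lt_of_mem_line
    (hstarstar : ∀ t : ℕ, 1 ≤ t → t ≤ j - 1 → t * q + 1 ≤ wSum w (j - t) (j - 1))
    {x y : ℕ} (hy : 1 ≤ y) (hyj : y < j) (hline : x + q * y = wSum w j m + 1 + q * j)
    (hjm : j ≤ m + 1) : x ≤ wSum w y m := by
  obtain ⟨t, rfl⟩ : ∃ t, j = y + t := ⟨j - y, by omega⟩
  have hgap := hstarstar t (by omega) (by omega)
  rw [show y + t - t = y by omega] at hgap
  have hsplit := wSum_add_wSum w (a := y) (b := y + t - 1) (c := m) (by omega) (by omega)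
  rw [show y + t - 1 + 1 = y + t by omega] at hsplit
  nlinarith

lemma le_wSum_of_gt_of_mem_line (hq : 0 < q)
    (hstar : ∀ t : ℕ, 1 ≤ t → t ≤ m + 1 - j → wSum w j (j + t - 1) + 1 ≤ t * q)
    {x y : ℕ} (hx : 1 ≤ x) (hjy : j < y) (hline : x + q * y = wSum w j m + 1 + q * j)
    (hjm : j ≤ m + 1) : y ≤ m ∧ x ≤ wSum w y m := by
  obtain ⟨t, rfl⟩ : ∃ t, y = j + t := ⟨y - j, by omega⟩
  have hym : j + t ≤ m := by
    -- past row `m` the line has already left the quadrant `x ≥ 1`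
    by_contra! hmy
    have hWq : wSum w j m + 1 ≤ t * q := by
      rcases Nat.eq_or_lt_of_le hjm with rfl | hjm
      · rw [wSum_eq_zero_of_lt w (by omega)]
        nlinarith
      · have hend := hstar (m + 1 - j) (by omega) le_rfl
        rw [show j + (m + 1 - j) - 1 = m by omega] at hend
        nlinarith [Nat.mul_le_mul_right q (show m + 1 - j ≤ t by omega)]
    nlinarith
  have hgap := hstar t (by omega) (by omega)
  have hsplit := wSum_add_wSum w (a := j) (b := j + t - 1) (c := m) (by omega) (by omega)
  rw [show j + t - 1 + 1 = j + t by omega] at hsplit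
  exact ⟨hym, by nlinarith⟩

end Staircase

theorem staircase_reduction_basic_general (n q : ℕ) (hq : 0 < q)
    (T : Set Slope) (hT : some (-(1 / (q : ℚ))) ∈ T)
    (m : ℕ) (w : ℕ → ℕ)
    (hJ : ∀ x y : ℕ, 1 ≤ y → y ≤ m → 1 ≤ x → x ≤ wSum w y m →
      UniqSolv n n T ((x : ℤ), (y : ℤ)))
    (j : ℕ) (hj1 : 1 ≤ j) (hj2 : j ≤ m + 1)
    (hptx : wSum w j m + 1 ≤ n) (hpty : j ≤ n)
    (hstar : ∀ t : ℕ, 1 ≤ t → t ≤ m + 1 - j → wSum w j (j + t - 1) + 1 ≤ t * q)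
    (hstarstar : ∀ t : ℕ, 1 ≤ t → t ≤ j - 1 → t * q + 1 ≤ wSum w (j - t) (j - 1)) :
    UniqSolv n n T (((wSum w j m + 1 : ℕ) : ℤ), (j : ℤ)) := by
  have hq0 : q ≠ 0 := hq.ne'
  refine UniqSolv.of_line hT (c := ((j : ℤ) : ℝ) + (((wSum w j m + 1 : ℕ) : ℤ) : ℝ) / q)
    ?_ ?_
  · rw [mem_linePoints_neg_inv_iff hq0]
    refine ⟨⟨?_, ?_⟩, rfl⟩ <;> simp only [Finset.mem_Icc] <;> omega
  · rintro ⟨x, y⟩ hp hne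
    rw [mem_linePoints_neg_inv_iff hq0] at hp
    obtain ⟨⟨hx, hy⟩, hline⟩ := hp
    simp only [Finset.mem_Icc] at hx hy hline
    lift x to ℕ using by omega
    lift y to ℕ using by omega
    have hline' : x + q * y = wSum w j m + 1 + q * j := by exact_mod_cast hline
    rcases lt_trichotomy y j with hyj | rfl | hjy
    · exact hJ x y (by omega) (by omega) (by omega)
        (le_wSum_of_lt_of_mem_line hstarstar (by omega) hyj hline' hj2)
    · exact absurd (by congr 2; omega) hne
    · obtain ⟨hym, hxw⟩ := le_wSum_of_gt_of_mem_line hq hstar (by omega) hjy hline' hj2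
      exact hJ x y (by omega) hym (by omega) hxw

/-- the basic staircase reduction lemma. Given a slope `−1/q ∈ T` and a
sequence `ω = (w_1, …, w_m)` of non-negative integers with `m ≤ n`, `ω(1,m) ≤ n`, all of
whose staircase region `J_ω = {(x,y) : 1 ≤ y ≤ m, 1 ≤ x ≤ ω(y,m)}` is uniquely solvable,
if `1 ≤ j ≤ m+1`, the point `(ω(j,m)+1, j)` lies in `I_{n,n}`,
`tq ≥ ω(j, j+t−1) + 1` for `1 ≤ t ≤ m−j+1`, and `tq + 1 ≤ ω(j−t, j−1)` for `1 ≤ t ≤ j−1`,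
then the entry `(ω(j,m)+1, j)` is uniquely solvable. -/
theorem staircase_reduction_basic (n q : ℕ) (hn : 0 < n) (hq : 0 < q)
    (T : Set Slope) (hT : some (-(1 / (q : ℚ))) ∈ T)
    (m : ℕ) (w : ℕ → ℕ) (hm : m ≤ n) (hsum : wSum w 1 m ≤ n)
    (hJ : ∀ x y : ℕ, 1 ≤ y → y ≤ m → 1 ≤ x → x ≤ wSum w y m →
      UniqSolv n n T ((x : ℤ), (y : ℤ)))
    (j : ℕ) (hj1 : 1 ≤ j) (hj2 : j ≤ m + 1)
    (hptx : wSum w j m + 1 ≤ n) (hpty : j ≤ n)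
    (hstar : ∀ t : ℕ, 1 ≤ t → t ≤ m + 1 - j → wSum w j (j + t - 1) + 1 ≤ t * q)
    (hstarstar : ∀ t : ℕ, 1 ≤ t → t ≤ j - 1 → t * q + 1 ≤ wSum w (j - t) (j - 1)) :
    UniqSolv n n T (((wSum w j m + 1 : ℕ) : ℤ), (j : ℤ)) :=
  staircase_reduction_basic_general n q hq T hT m w hJ j hj1 hj2 hptx hpty hstar hstarstar
end

section
/- Let q ≥ 2 be an integer, let m(q) := q + (q−1)(q+2)/2, and let ω_q = (w^q_1, …, w^q_{m(q)}) be defined by: w^q_i = q+1−i if 1 ≤ i ≤ q; w^q_i = 1 if i = q + (j−1)(j+2)/2 for some integer 2 ≤ j ≤ q; and w^q_i = 0 otherwise. Let n be a positive integer with 2n ≥ q² + 3q − 2, and let T = C_{−q} = {0, ∞} ∪ {k : k ∈ ℤ, 1 ≤ |k| ≤ q−1} ∪ {1/k : k ∈ ℤ, 1 ≤ |k| ≤ q−1} ∪ {−1/q, −q}. Then every entry of J_{ω_q} is uniquely solvable with respect to T on I_{n,n}. -/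
open Classical

/-- `m(q) = q + (q−1)(q+2)/2`. -/
def mOf (q : ℕ) : ℕ := q + (q - 1) * (q + 2) / 2

/-- The sequence `ω_q`: `w^q_i = q+1−i` for `1 ≤ i ≤ q`, `w^q_i = 1` if
`i = q + (j−1)(j+2)/2` for some `2 ≤ j ≤ q`, and `w^q_i = 0` otherwise. -/
noncomputable def wq (q : ℕ) : ℕ → ℕ := fun i =>
  if 1 ≤ i ∧ i ≤ q then q + 1 - i
  else if ∃ j : ℕ, 2 ≤ j ∧ j ≤ q ∧ i = q + (j - 1) * (j + 2) / 2 then 1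
  else 0

/-- The slope set `C_{−q} = {0, ∞} ∪ {±k, ±1/k : 1 ≤ k ≤ q−1} ∪ {−1/q, −q}`. -/
def CnegQ (q : ℕ) : Set Slope :=
  ({some 0, none} ∪
    {s | ∃ k : ℤ, 1 ≤ |k| ∧ |k| ≤ (q : ℤ) - 1 ∧ (s = some (k : ℚ) ∨ s = some (1 / (k : ℚ)))}) ∪
  {some (-(1 / (q : ℚ))), some (-(q : ℚ))}

/-!
Write `k = q + 1 - x`. The region `Stair q` consists of the columns `1 ≤ x ≤ q` of height
`q + (k - 1)(k + 2) / 2`, which are exactly the positions of the isolated ones of `ω_q`, together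
with their mirror image in the diagonal; it contains `J_{ω_q}`. On the line of slope `-k` through
a point `(x, y)` of the region with `x ≤ y`, every other point of the positive quadrant lies in the
region again and has strictly smaller potential `2 max + min (2q + 2 - min)`. So the clue along
that line determines the entry at `(x, y)` from entries of smaller potential, and induction on the
potential solves the whole region; below the diagonal the mirrored slope `-1/k`, `k = q + 1 - y`,
does the same. All slopes `-k`, `-1/k` with `1 ≤ k ≤ q` belong to `C_{-q}`.
-/

noncomputable def gridLine (n m : ℕ) (s : Slope) (c : ℝ) : Finset (ℤ × ℤ) :=
  (Finset.Icc (1 : ℤ) n ×ˢ Finset.Icc (1 : ℤ) m).filter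
      (fun p => match s with
        | none => (p.1 : ℝ) = c
        | some r => (p.2 : ℝ) = (r : ℝ) * (p.1 : ℝ) + c)

section Tomography

variable {n m : ℕ}

lemma clueSum_eq_sum_gridLine (s : Slope) (c : ℝ) (f : ℤ × ℤ → ℝ) :
    clueSum n m s c f = ∑ p ∈ gridLine n m s c, f p :=
  rfl

theorem uniqSolv_of_peeling {T : Set Slope} {R : Set (ℤ × ℤ)} (μ : ℤ × ℤ → ℕ)
    (hR : ∀ p ∈ R, ∃ s ∈ T, ∃ c, p ∈ gridLine n m s c ∧
      ∀ p' ∈ gridLine n m s c, p' ≠ p → p' ∈ R ∧ μ p' < μ p) :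
    ∀ p ∈ R, UniqSolv n m T p := by
  intro p hp f g hfg
  induction p using (measure μ).wf.induction with
  | h p ih =>
    obtain ⟨s, hs, c, hpℓ, hℓ⟩ := hR p hp
    have hclue := hfg s hs c
    rw [clueSum_eq_sum_gridLine, clueSum_eq_sum_gridLine, ← Finset.add_sum_erase _ _ hpℓ,
      ← Finset.add_sum_erase _ _ hpℓ] at hclue
    have hrest : ∑ p' ∈ (gridLine n m s c).erase p, f p' =
        ∑ p' ∈ (gridLine n m s c).erase p, g p' := by
      refine Finset.sum_congr rfl fun p' hp' => ?_
      obtain ⟨hp'R, hμ⟩ := hℓ p' (Finset.mem_of_mem_erase hp') (Finset.ne_of_mem_erase hp')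
      exact ih p' hμ hp'R
    linarith

lemma mem_gridLine_neg_intCast {k c : ℤ} {p : ℤ × ℤ} :
    p ∈ gridLine n m (some (-(k : ℚ))) c ↔
      p ∈ Finset.Icc (1 : ℤ) n ×ˢ Finset.Icc (1 : ℤ) m ∧ k * p.1 + p.2 = c := by
  rw [gridLine, Finset.mem_filter]
  refine and_congr_right fun _ => ?_
  rw [← @Int.cast_inj ℝ]
  push_cast
  constructor <;> intro h <;> linarith

lemma mem_gridLine_neg_inv_intCast {k c : ℤ} (hk : k ≠ 0) {p : ℤ × ℤ} :
    p ∈ gridLine n m (some (-(1 / (k : ℚ)))) (c / k) ↔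
      p ∈ Finset.Icc (1 : ℤ) n ×ˢ Finset.Icc (1 : ℤ) m ∧ p.1 + k * p.2 = c := by
  have hk' : (k : ℝ) ≠ 0 := by exact_mod_cast hk
  rw [gridLine, Finset.mem_filter]
  refine and_congr_right fun _ => ?_
  rw [← @Int.cast_inj ℝ]
  push_cast
  constructor <;> intro h
  · field_simp at h
    linarith
  · field_simp
    linarith

end Tomography

lemma neg_intCast_mem_CnegQ {q : ℕ} {k : ℤ} (hk1 : 1 ≤ k) (hkq : k ≤ q) :
    some (-(k : ℚ)) ∈ CnegQ q := by
  rcases hkq.eq_or_lt with rfl | hkq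
  · simp [CnegQ]
  have habs : |-k| = k := by rw [abs_neg, abs_of_pos (by omega)]
  exact Or.inl (Or.inr ⟨-k, by omega, by omega, Or.inl (by push_cast; rfl)⟩)

lemma neg_inv_intCast_mem_CnegQ {q : ℕ} {k : ℤ} (hk1 : 1 ≤ k) (hkq : k ≤ q) :
    some (-(1 / (k : ℚ))) ∈ CnegQ q := by
  rcases hkq.eq_or_lt with rfl | hkq
  · simp [CnegQ]
  have habs : |-k| = k := by rw [abs_neg, abs_of_pos (by omega)]
  exact Or.inl (Or.inr ⟨-k, by omega, by omega, Or.inr (by push_cast; rw [div_neg])⟩)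

def StairHalf (q x y : ℤ) : Prop :=
  1 ≤ x ∧ x ≤ q ∧ 1 ≤ y ∧ 2 * y ≤ 2 * q + (q - x) * (q + 3 - x)

def Stair (q : ℤ) : Set (ℤ × ℤ) := {p | StairHalf q p.1 p.2 ∨ StairHalf q p.2 p.1}

def stairPotential (q : ℤ) (p : ℤ × ℤ) : ℤ :=
  2 * max p.1 p.2 + min p.1 p.2 * (2 * q + 2 - min p.1 p.2)

section Stair

variable {q x y k t : ℤ}

lemma swap_mem_stair {p : ℤ × ℤ} : p.swap ∈ Stair q ↔ p ∈ Stair q :=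
  Or.comm

lemma stairPotential_swap (p : ℤ × ℤ) : stairPotential q p.swap = stairPotential q p := by
  simp only [stairPotential, Prod.fst_swap, Prod.snd_swap, max_comm, min_comm]

lemma StairHalf.two_mul_le (h : StairHalf q x y) (hk : x + k = q + 1) :
    2 * y ≤ 2 * q + (k - 1) * (k + 2) := by
  obtain ⟨-, -, -, h⟩ := h
  rwa [show q - x = k - 1 by omega, show q + 3 - x = k + 2 by omega] at h

lemma StairHalf.of_swap (h : StairHalf q y x) (hxy : x ≤ y) : StairHalf q x y := by
  obtain ⟨hy1, hyq, hx1, -⟩ := h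
  have hxq : x ≤ q := hxy.trans hyq
  refine ⟨hx1, hxq, hy1, ?_⟩
  nlinarith [mul_nonneg (sub_nonneg.2 hxq) (by omega : (0 : ℤ) ≤ q + 3 - x)]

lemma StairHalf.of_mem_stair (h : (x, y) ∈ Stair q) (hxy : x ≤ y) : StairHalf q x y :=
  h.elim id (StairHalf.of_swap · hxy)

lemma StairHalf.two_mul_le_sq (h : StairHalf q x y) :
    2 * x ≤ q ^ 2 + 3 * q - 2 ∧ 2 * y ≤ q ^ 2 + 3 * q - 2 := by
  obtain ⟨hx1, hxq, -, hy⟩ := h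
  constructor
  · nlinarith
  · nlinarith [mul_nonneg (sub_nonneg.2 hx1) (by omega : (0 : ℤ) ≤ 2 * q + 2 - x)]

lemma stairPotential_pos {p : ℤ × ℤ} (h : p ∈ Stair q) : 0 < stairPotential q p := by
  wlog hle : p.1 ≤ p.2 generalizing p
  · rw [← stairPotential_swap]
    exact this (swap_mem_stair.2 h) (by simp only [Prod.fst_swap, Prod.snd_swap]; omega)
  obtain ⟨x, y⟩ := p
  obtain ⟨hx1, hxq, -, -⟩ := StairHalf.of_mem_stair h hle
  simp only [stairPotential, max_eq_right hle, min_eq_left hle]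
  nlinarith

lemma stairPotential_of_le (hxy : x ≤ y) :
    stairPotential q (x, y) = 2 * y + x * (2 * q + 2 - x) := by
  simp only [stairPotential, max_eq_right hxy, min_eq_left hxy]

lemma StairHalf.shift_same (h : StairHalf q x y) (hk : x + k = q + 1) (hu : 1 ≤ x + t)
    (huv : x + t ≤ y - k * t) : StairHalf q (x + t) (y - k * t) := by
  have hy := h.two_mul_le hk
  have hk1 : 1 ≤ k := by linarith [h.2.1]
  have htt : 0 ≤ t * (t - 1) := by rcases le_or_gt t 0 with ht | ht <;> nlinarith
  have huq : x + t ≤ q := by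
    by_contra! hq
    nlinarith [mul_le_mul_of_nonneg_left (by omega : k ≤ t) (by omega : (0 : ℤ) ≤ k)]
  refine ⟨hu, huq, by omega, ?_⟩
  rw [show q - (x + t) = k - t - 1 by omega, show q + 3 - (x + t) = k - t + 2 by omega]
  nlinarith

lemma stairPotential_shift_same (hxy : x ≤ y) (hk : x + k = q + 1) (huv : x + t ≤ y - k * t) :
    stairPotential q (x + t, y - k * t) = stairPotential q (x, y) - t ^ 2 := by
  rw [stairPotential_of_le huv, stairPotential_of_le hxy, show k = q + 1 - x by omega]
  ring

lemma StairHalf.shift_cross (h : StairHalf q x y) (hk : x + k = q + 1) (ht : 0 < t)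
    (hv : 1 ≤ y - k * t) (hvu : y - k * t < x + t) : StairHalf q (y - k * t) (x + t) := by
  have hy := h.two_mul_le hk
  have hk1 : 1 ≤ k := by linarith [h.2.1]
  have hvq : y - k * t ≤ q := by
    by_contra! hq
    nlinarith [mul_le_mul_of_nonneg_left (by omega : k + 1 ≤ t) (by omega : (0 : ℤ) ≤ k)]
  refine ⟨hv, hvq, by omega, ?_⟩
  set a := q - (y - k * t)
  rcases lt_or_ge t k with htk | htk
  · nlinarith
  · have ha : t - k + 1 ≤ a := by
      nlinarith [mul_nonneg (by omega : (0 : ℤ) ≤ k - 1) (by omega : (0 : ℤ) ≤ 2 * t - k)]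
    rw [show q + 3 - (y - k * t) = a + 3 by omega]
    nlinarith

lemma stairPotential_shift_cross_lt (h : StairHalf q x y) (hxy : x ≤ y) (hk : x + k = q + 1)
    (ht : 0 < t) (hv : 1 ≤ y - k * t) (hvu : y - k * t < x + t) :
    stairPotential q (x + t, y - k * t) < stairPotential q (x, y) := by
  set v := y - k * t with hv_def
  have hvq : v ≤ q := (h.shift_cross hk ht hv hvu).2.1
  have hxq : x ≤ q := h.2.1
  have hdiff : stairPotential q (x, y) - stairPotential q (x + t, v) =
      (x - v) * (2 * q - x - v) + 2 * t * (k - 1) := by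
    rw [← stairPotential_swap (x + t, v), Prod.swap_prod_mk, stairPotential_of_le hvu.le,
      stairPotential_of_le hxy, hv_def, show k = q + 1 - x by omega]
    ring
  suffices 0 < (x - v) * (2 * q - x - v) + 2 * t * (k - 1) by omega
  rcases le_or_gt v x with hvx | hxv
  · rcases eq_or_lt_of_le hxq with rfl | hxq
    -- at the corner `x = y = q` we have `k = 1`, so only the first term, `t ^ 2`, survives
    · have hyx : y = x := le_antisymm (by nlinarith [h.two_mul_le hk]) hxy
      have hk1 : k = 1 := by omega
      subst hk1 hyx
      nlinarith
    · nlinarith [mul_nonneg (sub_nonneg.2 hvx) (by omega : (0 : ℤ) ≤ 2 * q - x - v)]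
  · have h1 : (v - x) * (2 * q - x - v) ≤ (t - 1) * (2 * k - 3) :=
      mul_le_mul (by omega) (by omega) (by omega) (by omega)
    nlinarith

lemma StairHalf.shift (h : StairHalf q x y) (hxy : x ≤ y) (hk : x + k = q + 1) (ht : t ≠ 0)
    (hu : 1 ≤ x + t) (hv : 1 ≤ y - k * t) :
    (x + t, y - k * t) ∈ Stair q ∧
      stairPotential q (x + t, y - k * t) < stairPotential q (x, y) := by
  rcases le_or_gt (x + t) (y - k * t) with huv | hvu
  · refine ⟨Or.inl (h.shift_same hk hu huv), ?_⟩
    rw [stairPotential_shift_same hxy hk huv]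
    linarith [sq_pos_of_ne_zero ht]
  · have ht : 0 < t := by
      by_contra! ht
      nlinarith [h.2.1]
    exact ⟨Or.inr (h.shift_cross hk ht hv hvu), stairPotential_shift_cross_lt h hxy hk ht hv hvu⟩

lemma StairHalf.peel (h : StairHalf q x y) (hxy : x ≤ y) (hk : x + k = q + 1) {u v : ℤ}
    (hu : 1 ≤ u) (hv : 1 ≤ v) (hline : k * u + v = k * x + y) (hne : (u, v) ≠ (x, y)) :
    (u, v) ∈ Stair q ∧ stairPotential q (u, v) < stairPotential q (x, y) := by
  have hvt : v = y - k * (u - x) := by linear_combination hline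
  have hux : u - x ≠ 0 := fun h0 => hne (Prod.ext (by omega) (by rw [hvt, h0, mul_zero, sub_zero]))
  have := h.shift hxy hk hux (by omega) (by omega)
  rwa [add_sub_cancel, ← hvt] at this

lemma mem_grid_of_mem_stair {n : ℕ} (hn : q ^ 2 + 3 * q - 2 ≤ 2 * n) {p : ℤ × ℤ}
    (h : p ∈ Stair q) : p ∈ Finset.Icc (1 : ℤ) n ×ˢ Finset.Icc (1 : ℤ) n := by
  simp only [Finset.mem_product, Finset.mem_Icc]
  rcases h with h | h <;> (have := h.two_mul_le_sq; have := h.1; have := h.2.2.1; omega)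

end Stair

theorem stair_uniqSolv {q n : ℕ} (hn : (q : ℤ) ^ 2 + 3 * q - 2 ≤ 2 * n) :
    ∀ p ∈ Stair q, UniqSolv n n (CnegQ q) p := by
  refine uniqSolv_of_peeling (fun p => (stairPotential q p).toNat) fun p hp => ?_
  have hgrid := mem_grid_of_mem_stair hn hp
  obtain ⟨x, y⟩ := p
  rcases le_total x y with hxy | hyx
  · have h := StairHalf.of_mem_stair hp hxy
    refine ⟨_, neg_intCast_mem_CnegQ (k := q + 1 - x) (by linarith [h.2.1]) (by linarith [h.1]),
      (((q + 1 - x) * x + y : ℤ) : ℝ), mem_gridLine_neg_intCast.2 ⟨hgrid, rfl⟩, ?_⟩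
    rintro ⟨u, v⟩ hℓ hne
    obtain ⟨hgrid', hline⟩ := mem_gridLine_neg_intCast.1 hℓ
    simp only [Finset.mem_product, Finset.mem_Icc] at hgrid'
    obtain ⟨hmem, hlt⟩ := h.peel hxy (k := q + 1 - x) (by ring) hgrid'.1.1 hgrid'.2.1 hline hne
    exact ⟨hmem, (Int.toNat_lt_toNat (stairPotential_pos hp)).2 hlt⟩
  · have h : StairHalf q y x := StairHalf.of_mem_stair (swap_mem_stair.2 hp) hyx
    have hk : q + 1 - y ≠ 0 := by linarith [h.2.1]
    refine ⟨_,
      neg_inv_intCast_mem_CnegQ (k := q + 1 - y) (by linarith [h.2.1]) (by linarith [h.1]),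
      ((x + (q + 1 - y) * y : ℤ) : ℝ) / ((q + 1 - y : ℤ) : ℝ),
      (mem_gridLine_neg_inv_intCast hk).2 ⟨hgrid, rfl⟩, ?_⟩
    rintro ⟨u, v⟩ hℓ hne
    obtain ⟨hgrid', hline⟩ := (mem_gridLine_neg_inv_intCast hk).1 hℓ
    simp only [Finset.mem_product, Finset.mem_Icc] at hgrid'
    obtain ⟨hmem, hlt⟩ := h.peel hyx (k := q + 1 - y) (by ring) hgrid'.2.1 hgrid'.1.1
      (by linear_combination hline) (fun h => hne (by simp_all))
    refine ⟨swap_mem_stair.1 hmem, (Int.toNat_lt_toNat (stairPotential_pos hp)).2 ?_⟩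
    rwa [← stairPotential_swap (u, v), ← stairPotential_swap (x, y)]

def stairHeight (q j : ℕ) : ℕ := q + (j - 1) * (j + 2) / 2

section StaircaseSequence

open Finset

variable {q x y : ℕ}

lemma two_mul_stairHeight (q j : ℕ) : 2 * stairHeight q j = 2 * q + (j - 1) * (j + 2) := by
  have heven : 2 ∣ (j - 1) * (j + 2) := by
    rcases Nat.even_or_odd j with ⟨b, hb⟩ | ⟨b, hb⟩
    · exact Dvd.dvd.mul_left (by omega) _
    · exact Dvd.dvd.mul_right (by omega) _
  rw [stairHeight, mul_add, Nat.mul_div_cancel' heven]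

lemma stairHeight_mono (q : ℕ) : Monotone (stairHeight q) := fun _ _ h =>
  Nat.add_le_add_left (Nat.div_le_div_right (Nat.mul_le_mul (by omega) (by omega))) q

lemma wq_of_le {i : ℕ} (hi : 1 ≤ i) (hiq : i ≤ q) : wq q i = q + 1 - i := by
  rw [wq, if_pos ⟨hi, hiq⟩]

lemma wSum_split (w : ℕ → ℕ) {i j k : ℕ} (hij : i ≤ j + 1) (hjk : j ≤ k) :
    wSum w i k = wSum w i j + wSum w (j + 1) k := by
  simp only [wSum, ← Ico_add_one_right_eq_Icc]
  rw [sum_Ico_consecutive _ hij (by omega)]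

lemma wSum_wq_le_card (hy : q < y) :
    wSum (wq q) y (mOf q) ≤ #{j ∈ Icc 2 q | y ≤ stairHeight q j} := by
  have hw : ∀ i ∈ Icc y (mOf q),
      wq q i = if ∃ j, 2 ≤ j ∧ j ≤ q ∧ i = stairHeight q j then 1 else 0 := by
    intro i hi
    rw [wq, if_neg (by simp only [mem_Icc] at hi; omega)]
    rfl
  rw [wSum, sum_congr rfl hw, sum_boole, Nat.cast_id]
  calc #{i ∈ Icc y (mOf q) | ∃ j, 2 ≤ j ∧ j ≤ q ∧ i = stairHeight q j}
      ≤ #(image (stairHeight q) {j ∈ Icc 2 q | y ≤ stairHeight q j}) := by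
        refine card_le_card fun i hi => ?_
        simp only [mem_filter, mem_Icc] at hi
        obtain ⟨⟨hyi, -⟩, j, h2j, hjq, rfl⟩ := hi
        exact mem_image_of_mem _ (mem_filter.2 ⟨mem_Icc.2 ⟨h2j, hjq⟩, hyi⟩)
    _ ≤ _ := card_image_le

lemma card_filter_stairHeight_le (y : ℕ) : #{j ∈ Icc 2 q | y ≤ stairHeight q j} ≤ q - 1 :=
  (card_filter_le _ _).trans (by rw [Nat.card_Icc]; omega)

lemma le_stairHeight_of_le_card (hx : 1 ≤ x) (h : x ≤ #{j ∈ Icc 2 q | y ≤ stairHeight q j}) :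
    y ≤ stairHeight q (q + 1 - x) := by
  by_contra! hlt
  have hsub : {j ∈ Icc 2 q | y ≤ stairHeight q j} ⊆ Icc (q + 2 - x) q := by
    intro j hj
    simp only [mem_filter, mem_Icc] at hj ⊢
    refine ⟨?_, hj.1.2⟩
    by_contra! hjx
    exact absurd (hj.2.trans (stairHeight_mono q (by omega : j ≤ q + 1 - x))) (by omega)
  have := card_le_card hsub
  rw [Nat.card_Icc] at this
  omega

lemma two_mul_sum_Icc_sub (y q : ℕ) :
    2 * ∑ i ∈ Icc y q, (q + 1 - i) = (q + 1 - y) * (q + 2 - y) := by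
  rw [← Ico_add_one_right_eq_Icc, sum_Ico_eq_sum_range]
  set N := q + 1 - y
  have hrefl : ∑ k ∈ range N, (q + 1 - (y + k)) = ∑ k ∈ range N, (k + 1) := by
    rw [← sum_range_reflect]
    exact sum_congr rfl fun k hk => by simp only [mem_range] at hk; omega
  have hgauss := sum_range_id_mul_two (N + 1)
  rw [sum_range_succ', add_zero, Nat.add_sub_cancel] at hgauss
  rcases (by omega : q + 2 - y = N + 1 ∨ N = 0) with h | h
  · rw [hrefl, h]
    linarith
  · simp [h]

lemma two_mul_wSum_wq_le (hy : 1 ≤ y) (hyq : y ≤ q) :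
    2 * wSum (wq q) y (mOf q) ≤ 2 * q + (q - y) * (q + 3 - y) := by
  have hhead : wSum (wq q) y q = ∑ i ∈ Icc y q, (q + 1 - i) :=
    sum_congr rfl fun i hi => wq_of_le (by simp only [mem_Icc] at hi; omega) (mem_Icc.1 hi).2
  have htail : wSum (wq q) (q + 1) (mOf q) ≤ q - 1 :=
    (wSum_wq_le_card q.lt_succ_self).trans (card_filter_stairHeight_le _)
  have hgauss := two_mul_sum_Icc_sub y q
  have hqm : q ≤ mOf q := Nat.le_add_right q _
  rw [wSum_split _ (by omega) hqm, hhead]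
  rw [show q + 1 - y = q - y + 1 by omega, show q + 2 - y = q - y + 2 by omega] at hgauss
  rw [show q + 3 - y = q - y + 3 by omega]
  nlinarith [(by omega : wSum (wq q) (q + 1) (mOf q) + 1 ≤ q)]

end StaircaseSequence

lemma mem_stair_of_le_wSum {q x y : ℕ} (hy : 1 ≤ y) (hx : 1 ≤ x)
    (hxw : x ≤ wSum (wq q) y (mOf q)) : ((x : ℤ), (y : ℤ)) ∈ Stair q := by
  rcases le_or_gt y q with hyq | hyq
  · have h := (Nat.mul_le_mul_left 2 hxw).trans (two_mul_wSum_wq_le hy hyq)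
    zify [hyq, (by omega : y ≤ q + 3)] at h
    exact Or.inr (show StairHalf q y x from
      ⟨by exact_mod_cast hy, by exact_mod_cast hyq, by exact_mod_cast hx, h⟩)
  · have hxc := hxw.trans (wSum_wq_le_card hyq)
    have hxq : x ≤ q := by have := card_filter_stairHeight_le (q := q) y; omega
    have h := (Nat.mul_le_mul_left 2 (le_stairHeight_of_le_card hx hxc)).trans_eq
      (two_mul_stairHeight q _)
    rw [show q + 1 - x - 1 = q - x by omega, show q + 1 - x + 2 = q + 3 - x by omega] at h
    zify [hxq, (by omega : x ≤ q + 3)] at h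
    exact Or.inl (show StairHalf q x y from
      ⟨by exact_mod_cast hx, by exact_mod_cast hxq, by omega, h⟩)

theorem staircase_region_uniqSolv_general (q : ℕ) (n : ℕ)
    (h2n : q ^ 2 + 3 * q - 2 ≤ 2 * n) :
    ∀ x y : ℕ, 1 ≤ y → y ≤ mOf q → 1 ≤ x → x ≤ wSum (wq q) y (mOf q) →
      UniqSolv n n (CnegQ q) ((x : ℤ), (y : ℤ)) := by
  intro x y hy _ hx hxw
  have hnZ : (q : ℤ) ^ 2 + 3 * q - 2 ≤ 2 * n := by
    have := Nat.cast_pow (α := ℤ) q 2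
    omega
  exact stair_uniqSolv hnZ _ (mem_stair_of_le_wSum hy hx hxw)

/-- for `q ≥ 2` and `2n ≥ q² + 3q − 2`, every entry of the staircase region
`J_{ω_q}` is uniquely solvable with respect to `C_{−q}` on `I_{n,n}`. -/
theorem staircase_region_uniqSolv (q : ℕ) (hq : 2 ≤ q) (n : ℕ) (hn : 0 < n)
    (h2n : q ^ 2 + 3 * q - 2 ≤ 2 * n) :
    ∀ x y : ℕ, 1 ≤ y → y ≤ mOf q → 1 ≤ x → x ≤ wSum (wq q) y (mOf q) →
      UniqSolv n n (CnegQ q) ((x : ℤ), (y : ℤ)) :=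
  staircase_region_uniqSolv_general q n h2n
end
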